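/- Let β ∈ ℂ³ be a unit vector, and let B' ⊆ ℂ³ denote the orthogonal complement of β (a 2-dimensional subspace). Let α, α⊥ ∈ ℂ² be orthonormal, let η₀, η₁, η₂, η₃, η₄ ∈ ℂ² ⊗ B' (i.e., each ηᵢ lies in ℂ² ⊗ ℂ³ and is orthogonal to u ⊗ β for every u ∈ ℂ²). If the five vectors ψ₀ = α⊗β + η₀, ψ₁ = α⊥⊗β + η₁, ψ₂ = η₂, ψ₃ = η₃, ψ₄ = η₄ are pairwise orthogonal and ψ₂, ψ₃, ψ₄ are nonzero, then η₀ = 0 or η₁ = 0. -/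

import Mathlib

local notation "⟪" x ", " y "⟫" => @inner ℂ _ _ x y

/-- The simple tensor `u ⊗ v` in the concrete model `ℂ^m ⊗ ℂ^n ≃ ℂ^(m×n)`. -/
noncomputable def tp {m n : ℕ} (u : EuclideanSpace ℂ (Fin m))
    (v : EuclideanSpace ℂ (Fin n)) : EuclideanSpace ℂ (Fin m × Fin n) :=
  (WithLp.equiv 2 _).symm fun p => u p.1 * v p.2

/-!
Write `ψᵢ = γᵢ ⊗ β + ηᵢ` with `γ = (α, α⊥, 0, 0, 0)`. Since the `ηᵢ` are orthogonal to
`ℂ² ⊗ β`, the cross terms vanish and `⟪ψᵢ, ψⱼ⟫ = ⟪γᵢ, γⱼ⟫ ⟪β, β⟫ + ⟪ηᵢ, ηⱼ⟫`, so the `ηᵢ` are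
pairwise orthogonal. If `η₀` and `η₁` were both nonzero, the five `ηᵢ` together with
`e₀ ⊗ β` and `e₁ ⊗ β` would be seven pairwise orthogonal nonzero vectors in `ℂ⁶`.
-/

section TensorProduct

variable {m n : ℕ}

lemma inner_tp_tp (u u' : EuclideanSpace ℂ (Fin m)) (v v' : EuclideanSpace ℂ (Fin n)) :
    ⟪tp u v, tp u' v'⟫ = ⟪u, u'⟫ * ⟪v, v'⟫ := by
  simp only [tp, PiLp.inner_apply, RCLike.inner_apply, WithLp.equiv_symm_apply]
  rw [Fintype.sum_prod_type, Finset.sum_mul_sum]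
  refine Finset.sum_congr rfl fun i _ => Finset.sum_congr rfl fun j _ => ?_
  simp only [map_mul]
  ring

@[simp]
lemma tp_zero_left (v : EuclideanSpace ℂ (Fin n)) :
    tp (0 : EuclideanSpace ℂ (Fin m)) v = 0 := by
  ext p
  simp [tp]

lemma inner_tp_add_tp_add {u u' : EuclideanSpace ℂ (Fin m)} {v : EuclideanSpace ℂ (Fin n)}
    {η η' : EuclideanSpace ℂ (Fin m × Fin n)}
    (hη : ∀ w, ⟪tp w v, η⟫ = 0) (hη' : ∀ w, ⟪tp w v, η'⟫ = 0) :
    ⟪tp u v + η, tp u' v + η'⟫ = ⟪u, u'⟫ * ⟪v, v⟫ + ⟪η, η'⟫ := by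
  rw [inner_add_left, inner_add_right, inner_add_right, inner_tp_tp, hη',
    inner_eq_zero_symm.mp (hη u')]
  ring

lemma card_add_le_mul_of_orthogonal_tp {ι : Type*} [Fintype ι]
    {v : EuclideanSpace ℂ (Fin n)} (hv : v ≠ 0) {η : ι → EuclideanSpace ℂ (Fin m × Fin n)}
    (hη : ∀ i, η i ≠ 0) (horth : Pairwise fun i j => ⟪η i, η j⟫ = 0)
    (hηv : ∀ i w, ⟪tp w v, η i⟫ = 0) :
    Fintype.card ι + m ≤ m * n := by
  have he := EuclideanSpace.orthonormal_single (𝕜 := ℂ) (ι := Fin m)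
  let ξ : Fin m ⊕ ι → EuclideanSpace ℂ (Fin m × Fin n) :=
    Sum.elim (fun k => tp (EuclideanSpace.single k 1) v) η
  have hξ : ∀ a, ξ a ≠ 0 := by
    rintro (k | i)
    · intro h
      have hself := congrArg (fun x => ⟪x, x⟫) h
      simp only [ξ, Sum.elim_inl, inner_tp_tp, inner_zero_left] at hself
      exact mul_ne_zero (inner_self_ne_zero.mpr (he.ne_zero k)) (inner_self_ne_zero.mpr hv) hself
    · exact hη i
  have hξorth : Pairwise fun a b => ⟪ξ a, ξ b⟫ = 0 := by
    rintro (k | i) (l | j) hab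
    · simp [ξ, inner_tp_tp, he.inner_eq_zero (fun h => hab (congrArg _ h))]
    · exact hηv j _
    · exact inner_eq_zero_symm.mp (hηv i _)
    · exact horth fun h => hab (congrArg _ h)
  have hcard := (linearIndependent_of_ne_zero_of_inner_eq_zero hξ hξorth).fintype_card_le_finrank
  simpa [Fintype.card_sum, add_comm] using hcard

end TensorProduct

theorem eta_zero_of_five_orthogonal_general
    (β : EuclideanSpace ℂ (Fin 3)) (hβ : ‖β‖ = 1)
    (α αp : EuclideanSpace ℂ (Fin 2))
    (hperp : ⟪α, αp⟫ = 0)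
    (η₀ η₁ η₂ η₃ η₄ : EuclideanSpace ℂ (Fin 2 × Fin 3))
    (hB' : ∀ (i : Fin 5) (u : EuclideanSpace ℂ (Fin 2)),
      ⟪tp u β, ![η₀, η₁, η₂, η₃, η₄] i⟫ = 0)
    (ψ : Fin 5 → EuclideanSpace ℂ (Fin 2 × Fin 3))
    (hψ : ψ = ![tp α β + η₀, tp αp β + η₁, η₂, η₃, η₄])
    (horth : ∀ i j, i ≠ j → ⟪ψ i, ψ j⟫ = 0)
    (h2 : η₂ ≠ 0) (h3 : η₃ ≠ 0) (h4 : η₄ ≠ 0) :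
    η₀ = 0 ∨ η₁ = 0 := by
  by_contra! h01
  set η := ![η₀, η₁, η₂, η₃, η₄]
  set γ : Fin 5 → EuclideanSpace ℂ (Fin 2) := ![α, αp, 0, 0, 0]
  have hψγ : ∀ i, ψ i = tp (γ i) β + η i := by
    intro i
    fin_cases i <;> simp [hψ, γ, η]
  have hγ : Pairwise fun i j => ⟪γ i, γ j⟫ = 0 := by
    intro i j hij
    fin_cases i <;> fin_cases j <;> simp_all [γ, inner_eq_zero_symm.mp hperp]
  have hηorth : Pairwise fun i j => ⟪η i, η j⟫ = 0 := by
    intro i j hij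
    simpa [hψγ, inner_tp_add_tp_add (hB' i) (hB' j), hγ hij] using horth i j hij
  have hη : ∀ i, η i ≠ 0 := by
    intro i
    fin_cases i <;> simp_all [η]
  have hβ0 : β ≠ 0 := norm_ne_zero_iff.mp (by simp [hβ])
  have := card_add_le_mul_of_orthogonal_tp hβ0 hη hηorth hB'
  simp at this

/-- Five pairwise orthogonal states in ℂ²⊗ℂ³ of the form α⊗β+η₀, α⊥⊗β+η₁, η₂, η₃, η₄,
with all ηᵢ in ℂ²⊗B' (B' the orthocomplement of β) and η₂,η₃,η₄ nonzero, force
η₀ = 0 or η₁ = 0. -/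
theorem eta_zero_of_five_orthogonal
    (β : EuclideanSpace ℂ (Fin 3)) (hβ : ‖β‖ = 1)
    (α αp : EuclideanSpace ℂ (Fin 2))
    (hα : ‖α‖ = 1) (hαp : ‖αp‖ = 1) (hperp : ⟪α, αp⟫ = 0)
    (η₀ η₁ η₂ η₃ η₄ : EuclideanSpace ℂ (Fin 2 × Fin 3))
    (hB' : ∀ (i : Fin 5) (u : EuclideanSpace ℂ (Fin 2)),
      ⟪tp u β, ![η₀, η₁, η₂, η₃, η₄] i⟫ = 0)
    (ψ : Fin 5 → EuclideanSpace ℂ (Fin 2 × Fin 3))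
    (hψ : ψ = ![tp α β + η₀, tp αp β + η₁, η₂, η₃, η₄])
    (horth : ∀ i j, i ≠ j → ⟪ψ i, ψ j⟫ = 0)
    (h2 : η₂ ≠ 0) (h3 : η₃ ≠ 0) (h4 : η₄ ≠ 0) :
    η₀ = 0 ∨ η₁ = 0 :=
  eta_zero_of_five_orthogonal_general β hβ α αp hperp η₀ η₁ η₂ η₃ η₄ hB' ψ hψ horth h2 h3 h4
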